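/- arXiv:2509.12449 — 2 statements merged into one kernel-verified Lean document; each statement's English description precedes it below -/
import Mathlib

section
/- In the formal power series ring ℂ[[s, z, w, z', w']] in five variables over ℂ, the ideal generated by s·(z − z') and s·(w − w') equals the intersection of the prime ideals (s) and (z − z', w − w'); in particular it is a radical ideal. -/
/-!
Killing a finite set `S` of variables (rescaling them by `0`) is a ring endomorphism of
`R⟦σ⟧` whose kernel is `(X s : s ∈ S)`: peeling off one variable at a time, `f - f|_{X a = 0}`
is divisible by `X a`. Over a domain these ideals are therefore prime. The substitution
`z' ↦ z - z'`, `w' ↦ w - w'` is an involutive automorphism carrying `(z', w')` onto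
`(z - z', w - w')`, which is hence prime and does not contain `s`. For a prime `P` and `x ∉ P`
one has `(x) ∩ P = (x) P`, which gives the equality, and intersections of primes are radical.
-/

namespace MvPowerSeries

variable {σ R : Type*} [CommRing R]

section killVars

variable [DecidableEq σ] (S : Finset σ)

noncomputable def killVars : MvPowerSeries σ R →+* MvPowerSeries σ R :=
  rescale fun i => if i ∈ S then 0 else 1

theorem coeff_killVars (f : MvPowerSeries σ R) (n : σ →₀ ℕ) :
    coeff n (killVars S f) = if ∀ i ∈ S, n i = 0 then coeff n f else 0 := by
  rw [killVars, coeff_rescale, Finsupp.prod]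
  split_ifs with h
  · rw [Finset.prod_eq_one, one_mul]
    intro i _
    split_ifs with hi
    · rw [h i hi, pow_zero]
    · rw [one_pow]
  · push Not at h
    obtain ⟨i, hiS, hi⟩ := h
    rw [Finset.prod_eq_zero (Finsupp.mem_support_iff.2 hi) (by rw [if_pos hiS, zero_pow hi]),
      zero_mul]

theorem killVars_empty (f : MvPowerSeries σ R) : killVars ∅ f = f := by
  ext n
  simp [coeff_killVars]

theorem killVars_insert (a : σ) (f : MvPowerSeries σ R) :
    killVars (insert a S) f = killVars {a} (killVars S f) := by
  ext n
  simp only [coeff_killVars, Finset.forall_mem_insert, Finset.mem_singleton, forall_eq]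
  by_cases ha : n a = 0 <;> simp [ha]

theorem X_dvd_sub_killVars_singleton (a : σ) (f : MvPowerSeries σ R) :
    X a ∣ f - killVars {a} f :=
  X_dvd_iff.2 fun m hm => by simp [coeff_killVars, hm]

theorem sub_killVars_mem_span (f : MvPowerSeries σ R) :
    f - killVars S f ∈ Ideal.span (X '' S) := by
  induction S using Finset.induction_on generalizing f with
  | empty => simp [killVars_empty]
  | insert a S _ ih =>
    rw [killVars_insert, Finset.coe_insert, Set.image_insert_eq, Ideal.span_insert,
      show f - killVars {a} (killVars S f) =
        (killVars S f - killVars {a} (killVars S f)) + (f - killVars S f) by ring]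
    exact Submodule.add_mem_sup
      (Ideal.mem_span_singleton.2 (X_dvd_sub_killVars_singleton a _)) (ih f)

theorem killVars_X_of_mem {i : σ} (hi : i ∈ S) : killVars S (X i : MvPowerSeries σ R) = 0 := by
  ext n
  rw [coeff_killVars, map_zero]
  split_ifs with h
  · rw [coeff_X, if_neg]
    rintro rfl
    simpa using h i hi
  · rfl

theorem ker_killVars :
    RingHom.ker (killVars S) = Ideal.span (X '' S : Set (MvPowerSeries σ R)) := by
  refine le_antisymm (fun f hf => ?_) (Ideal.span_le.2 ?_)
  · simpa [RingHom.mem_ker.1 hf] using sub_killVars_mem_span S f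
  · rintro _ ⟨i, hi, rfl⟩
    exact killVars_X_of_mem S hi

theorem isPrime_span_X_image [IsDomain R] :
    (Ideal.span (X '' S : Set (MvPowerSeries σ R))).IsPrime :=
  have : IsDomain (MvPowerSeries σ R) := NoZeroDivisors.to_isDomain _
  ker_killVars (R := R) S ▸ RingHom.ker_isPrime _

theorem X_mem_span_X_image_iff [Nontrivial R] {i : σ} :
    (X i : MvPowerSeries σ R) ∈ Ideal.span (X '' S) ↔ i ∈ S := by
  refine ⟨fun h => ?_, fun hi => Ideal.subset_span ⟨i, hi, rfl⟩⟩
  rw [← ker_killVars, RingHom.mem_ker] at h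
  by_contra hi
  have h1 := congrArg (coeff (Finsupp.single i 1)) h
  rw [coeff_killVars, if_pos, coeff_X, if_pos rfl, map_zero] at h1
  · exact one_ne_zero h1
  · intro j hj
    rw [Finsupp.single_eq_of_ne (by rintro rfl; exact hi hj)]

end killVars

section shear

variable [DecidableEq σ] {i j : σ}

variable (R) in
noncomputable def shearFamily (i j : σ) : σ → MvPowerSeries σ R :=
  Function.update X j (X i - X j)

theorem shearFamily_self : shearFamily R i j j = X i - X j := Function.update_self ..

theorem shearFamily_of_ne {k : σ} (hk : k ≠ j) : shearFamily R i j k = X k :=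
  Function.update_of_ne hk ..

variable [Finite σ]

theorem hasSubst_shearFamily (i j : σ) : HasSubst (shearFamily R i j) :=
  hasSubst_of_constantCoeff_zero fun s => by
    rcases eq_or_ne s j with rfl | hs
    · simp [shearFamily_self]
    · simp [shearFamily_of_ne hs]

theorem subst_shearFamily_subst_shearFamily (hij : i ≠ j) (f : MvPowerSeries σ R) :
    subst (shearFamily R i j) (subst (shearFamily R i j) f) = f := by
  have ha := hasSubst_shearFamily (R := R) i j
  have hX : (fun s => subst (shearFamily R i j) (shearFamily R i j s)) = X := by
    funext s
    rcases eq_or_ne s j with rfl | hs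
    · rw [shearFamily_self, subst_sub ha, subst_X ha, subst_X ha, shearFamily_self,
        shearFamily_of_ne hij, sub_sub_cancel]
    · rw [shearFamily_of_ne hs, subst_X ha, shearFamily_of_ne hs]
  rw [subst_comp_subst_apply ha ha, hX, subst_self, id]

noncomputable def shear (hij : i ≠ j) : MvPowerSeries σ R ≃ₐ[R] MvPowerSeries σ R :=
  AlgEquiv.ofAlgHom (substAlgHom (hasSubst_shearFamily i j))
    (substAlgHom (hasSubst_shearFamily i j))
    (AlgHom.ext fun f => by simp [subst_shearFamily_subst_shearFamily hij])
    (AlgHom.ext fun f => by simp [subst_shearFamily_subst_shearFamily hij])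

theorem shear_X (hij : i ≠ j) (k : σ) :
    shear hij (X k : MvPowerSeries σ R) = shearFamily R i j k :=
  substAlgHom_X (hasSubst_shearFamily i j) k

end shear

end MvPowerSeries

theorem Ideal.IsPrime.span_singleton_inf_eq_mul {A : Type*} [CommRing A] {P : Ideal A}
    (hP : P.IsPrime) {x : A} (hx : x ∉ P) : Ideal.span {x} ⊓ P = Ideal.span {x} * P := by
  refine le_antisymm (fun y ⟨hy, hyP⟩ => ?_) Ideal.mul_le_inf
  obtain ⟨g, rfl⟩ := Ideal.mem_span_singleton'.1 hy
  exact Ideal.mem_span_singleton_mul.2 ⟨g, (hP.mem_or_mem hyP).resolve_right hx, mul_comm _ _⟩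

theorem Ideal.span_singleton_mul_span_pair {A : Type*} [CommRing A] (x a b : A) :
    Ideal.span {x} * Ideal.span {a, b} = Ideal.span {x * a, x * b} := by
  rw [Ideal.span_mul_span', Set.singleton_mul, Set.image_pair]

namespace MvPowerSeries

variable (R : Type*) [CommRing R]

noncomputable def diagShear : MvPowerSeries (Fin 5) R ≃+* MvPowerSeries (Fin 5) R :=
  ((shear (R := R) (by decide : (1 : Fin 5) ≠ 3)).trans
    (shear (by decide : (2 : Fin 5) ≠ 4))).toRingEquiv

theorem diagShear_X_zero : diagShear R (X 0) = X 0 := by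
  simp [diagShear, shear_X, shearFamily_of_ne]

theorem map_diagShear_span :
    Ideal.map (diagShear R) (Ideal.span {X 3, X 4}) = Ideal.span {X 1 - X 3, X 2 - X 4} := by
  simp [Ideal.map_span, Set.image_pair, diagShear, shear_X, shearFamily_of_ne, shearFamily_self]

end MvPowerSeries

open MvPowerSeries

/-- In `ℂ[[s, z, w, z', w']]` (variables `s = X 0`, `z = X 1`, `w = X 2`, `z' = X 3`,
`w' = X 4`), the ideal `(s(z - z'), s(w - w'))` equals the intersection of the prime
ideals `(s)` and `(z - z', w - w')`; in particular it is a radical ideal. -/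
theorem span_eq_inf_primes_Z3 :
    ((Ideal.span {X 0} : Ideal (MvPowerSeries (Fin 5) ℂ)).IsPrime ∧
      (Ideal.span {X 1 - X 3, X 2 - X 4} : Ideal (MvPowerSeries (Fin 5) ℂ)).IsPrime) ∧
    (Ideal.span {X 0 * (X 1 - X 3), X 0 * (X 2 - X 4)} :
        Ideal (MvPowerSeries (Fin 5) ℂ))
      = Ideal.span {X 0} ⊓ Ideal.span {X 1 - X 3, X 2 - X 4} ∧
    (Ideal.span {X 0 * (X 1 - X 3), X 0 * (X 2 - X 4)} :
        Ideal (MvPowerSeries (Fin 5) ℂ)).IsRadical := by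
  have hP1 : (Ideal.span {X 0} : Ideal (MvPowerSeries (Fin 5) ℂ)).IsPrime := by
    simpa using isPrime_span_X_image (R := ℂ) ({0} : Finset (Fin 5))
  have hP34 : (Ideal.span {X 3, X 4} : Ideal (MvPowerSeries (Fin 5) ℂ)).IsPrime := by
    simpa [Set.image_pair] using isPrime_span_X_image (R := ℂ) ({3, 4} : Finset (Fin 5))
  have hP2 : (Ideal.span {X 1 - X 3, X 2 - X 4} : Ideal (MvPowerSeries (Fin 5) ℂ)).IsPrime := by
    rw [← map_diagShear_span]
    exact Ideal.map_isPrime_of_equiv _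
  have hX0 : (X 0 : MvPowerSeries (Fin 5) ℂ) ∉ Ideal.span {X 1 - X 3, X 2 - X 4} := by
    rw [← map_diagShear_span, ← diagShear_X_zero, Ideal.apply_mem_of_equiv_iff]
    simpa [Set.image_pair] using
      (X_mem_span_X_image_iff (R := ℂ) ({3, 4} : Finset (Fin 5)) (i := 0)).not
  have heq : (Ideal.span {X 0 * (X 1 - X 3), X 0 * (X 2 - X 4)} :
      Ideal (MvPowerSeries (Fin 5) ℂ)) = Ideal.span {X 0} ⊓ Ideal.span {X 1 - X 3, X 2 - X 4} := by
    rw [hP2.span_singleton_inf_eq_mul hX0, Ideal.span_singleton_mul_span_pair]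
  exact ⟨⟨hP1, hP2⟩, heq, heq ▸ hP1.isRadical.inf hP2.isRadical⟩
end

section
/- In the polynomial ring ℂ[t₁, t₂, t₃, u₁, u₂, u₃], let J be the ideal generated by the six polynomials t_i·t_j − u_i·u_j for 1 ≤ i ≤ j ≤ 3. Then the radical of J equals the intersection of the two ideals (t₁ − u₁, t₂ − u₂, t₃ − u₃) and (t₁ + u₁, t₂ + u₂, t₃ + u₃). -/
open MvPolynomial

noncomputable def f1 : Fin 6 → MvPolynomial (Fin 6) ℂ := ![X 0, X 1, X 2, X 0, X 1, X 2]
noncomputable def f2 : Fin 6 → MvPolynomial (Fin 6) ℂ := ![X 0, X 1, X 2, -X 0, -X 1, -X 2]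

lemma f1_0 : f1 0 = X 0 := rfl
lemma f1_1 : f1 1 = X 1 := rfl
lemma f1_2 : f1 2 = X 2 := rfl
lemma f1_3 : f1 3 = X 0 := rfl
lemma f1_4 : f1 4 = X 1 := rfl
lemma f1_5 : f1 5 = X 2 := rfl
lemma f2_0 : f2 0 = X 0 := rfl
lemma f2_1 : f2 1 = X 1 := rfl
lemma f2_2 : f2 2 = X 2 := rfl
lemma f2_3 : f2 3 = -X 0 := rfl
lemma f2_4 : f2 4 = -X 1 := rfl
lemma f2_5 : f2 5 = -X 2 := rfl

lemma sub_aeval_mem {σ R : Type*} [CommRing R] (f : σ → MvPolynomial σ R) (p : MvPolynomial σ R) :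
    p - aeval f p ∈ Ideal.span (Set.range fun i => (X i : MvPolynomial σ R) - f i) := by
  induction p using MvPolynomial.induction_on with
  | C a => simp
  | add p q hp hq =>
    have h : p + q - aeval f (p + q) = (p - aeval f p) + (q - aeval f q) := by
      rw [map_add]; ring
    rw [h]; exact Ideal.add_mem _ hp hq
  | mul_X p i hp =>
    have h : p * X i - aeval f (p * X i) = p * (X i - f i) + f i * (p - aeval f p) := by
      rw [map_mul, aeval_X]; ring
    rw [h]
    exact Ideal.add_mem _ (Ideal.mul_mem_left _ _ (Ideal.subset_span ⟨i, rfl⟩))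
      (Ideal.mul_mem_left _ _ hp)

lemma span1_eq :
    (Ideal.span {X 0 - X 3, X 1 - X 4, X 2 - X 5} : Ideal (MvPolynomial (Fin 6) ℂ))
      = RingHom.ker (aeval f1 : MvPolynomial (Fin 6) ℂ →ₐ[ℂ] MvPolynomial (Fin 6) ℂ) := by
  apply le_antisymm
  · rw [Ideal.span_le]
    rintro x hx
    simp only [Set.mem_insert_iff, Set.mem_singleton_iff] at hx
    rcases hx with rfl | rfl | rfl <;>
      simp [RingHom.mem_ker, f1_0, f1_1, f1_2, f1_3, f1_4, f1_5]
  · intro p hp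
    have h0 : aeval f1 p = 0 := hp
    have h := sub_aeval_mem f1 p
    rw [h0, sub_zero] at h
    refine Ideal.span_le.mpr ?_ h
    rintro x ⟨i, rfl⟩
    fin_cases i
    · show (X 0 - X 0 : MvPolynomial (Fin 6) ℂ) ∈ _; simp
    · show (X 1 - X 1 : MvPolynomial (Fin 6) ℂ) ∈ _; simp
    · show (X 2 - X 2 : MvPolynomial (Fin 6) ℂ) ∈ _; simp
    · show (X 3 - X 0 : MvPolynomial (Fin 6) ℂ) ∈ _
      have : (X 3 - X 0 : MvPolynomial (Fin 6) ℂ) = -(X 0 - X 3) := by ring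
      rw [this]; exact neg_mem (Ideal.subset_span (by simp))
    · show (X 4 - X 1 : MvPolynomial (Fin 6) ℂ) ∈ _
      have : (X 4 - X 1 : MvPolynomial (Fin 6) ℂ) = -(X 1 - X 4) := by ring
      rw [this]; exact neg_mem (Ideal.subset_span (by simp))
    · show (X 5 - X 2 : MvPolynomial (Fin 6) ℂ) ∈ _
      have : (X 5 - X 2 : MvPolynomial (Fin 6) ℂ) = -(X 2 - X 5) := by ring
      rw [this]; exact neg_mem (Ideal.subset_span (by simp))

lemma span2_eq :
    (Ideal.span {X 0 + X 3, X 1 + X 4, X 2 + X 5} : Ideal (MvPolynomial (Fin 6) ℂ))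
      = RingHom.ker (aeval f2 : MvPolynomial (Fin 6) ℂ →ₐ[ℂ] MvPolynomial (Fin 6) ℂ) := by
  apply le_antisymm
  · rw [Ideal.span_le]
    rintro x hx
    simp only [Set.mem_insert_iff, Set.mem_singleton_iff] at hx
    rcases hx with rfl | rfl | rfl <;>
      simp [RingHom.mem_ker, f2_0, f2_1, f2_2, f2_3, f2_4, f2_5]
  · intro p hp
    have h0 : aeval f2 p = 0 := hp
    have h := sub_aeval_mem f2 p
    rw [h0, sub_zero] at h
    refine Ideal.span_le.mpr ?_ h
    rintro x ⟨i, rfl⟩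
    fin_cases i
    · show (X 0 - X 0 : MvPolynomial (Fin 6) ℂ) ∈ _; simp
    · show (X 1 - X 1 : MvPolynomial (Fin 6) ℂ) ∈ _; simp
    · show (X 2 - X 2 : MvPolynomial (Fin 6) ℂ) ∈ _; simp
    · show (X 3 - -X 0 : MvPolynomial (Fin 6) ℂ) ∈ _
      have : (X 3 - -X 0 : MvPolynomial (Fin 6) ℂ) = X 0 + X 3 := by ring
      rw [this]; exact Ideal.subset_span (by simp)
    · show (X 4 - -X 1 : MvPolynomial (Fin 6) ℂ) ∈ _
      have : (X 4 - -X 1 : MvPolynomial (Fin 6) ℂ) = X 1 + X 4 := by ring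
      rw [this]; exact Ideal.subset_span (by simp)
    · show (X 5 - -X 2 : MvPolynomial (Fin 6) ℂ) ∈ _
      have : (X 5 - -X 2 : MvPolynomial (Fin 6) ℂ) = X 2 + X 5 := by ring
      rw [this]; exact Ideal.subset_span (by simp)

lemma memJ (c1 c2 c3 c4 c5 c6 p : MvPolynomial (Fin 6) ℂ)
    (h : p = c1 * (X 0 * X 0 - X 3 * X 3) + c2 * (X 0 * X 1 - X 3 * X 4)
        + c3 * (X 0 * X 2 - X 3 * X 5) + c4 * (X 1 * X 1 - X 4 * X 4)
        + c5 * (X 1 * X 2 - X 4 * X 5) + c6 * (X 2 * X 2 - X 5 * X 5)) :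
    p ∈ (Ideal.span {X 0 * X 0 - X 3 * X 3, X 0 * X 1 - X 3 * X 4, X 0 * X 2 - X 3 * X 5,
        X 1 * X 1 - X 4 * X 4, X 1 * X 2 - X 4 * X 5, X 2 * X 2 - X 5 * X 5} :
        Ideal (MvPolynomial (Fin 6) ℂ)) := by
  rw [h]
  refine Ideal.add_mem _ (Ideal.add_mem _ (Ideal.add_mem _ (Ideal.add_mem _ (Ideal.add_mem _
    ?_ ?_) ?_) ?_) ?_) ?_ <;>
    exact Ideal.mul_mem_left _ _ (Ideal.subset_span (by simp))

/-- In `ℂ[t₁, t₂, t₃, u₁, u₂, u₃]` (with `tᵢ = X (i-1)` and `uᵢ = X (i+2)` for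
`i = 1, 2, 3`), let `J` be the ideal generated by the six polynomials
`tᵢtⱼ - uᵢuⱼ` for `1 ≤ i ≤ j ≤ 3`.  Then the radical of `J` equals the intersection
of the ideals `(t₁ - u₁, t₂ - u₂, t₃ - u₃)` and `(t₁ + u₁, t₂ + u₂, t₃ + u₃)`. -/
theorem radical_quadratic_monomial_ideal :
    (Ideal.span {X 0 * X 0 - X 3 * X 3, X 0 * X 1 - X 3 * X 4, X 0 * X 2 - X 3 * X 5,
        X 1 * X 1 - X 4 * X 4, X 1 * X 2 - X 4 * X 5, X 2 * X 2 - X 5 * X 5} :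
        Ideal (MvPolynomial (Fin 6) ℂ)).radical
      = Ideal.span {X 0 - X 3, X 1 - X 4, X 2 - X 5}
        ⊓ Ideal.span {X 0 + X 3, X 1 + X 4, X 2 + X 5} := by
  apply le_antisymm
  · refine le_inf ?_ ?_
    · rw [span1_eq]
      have hJ : Ideal.span {X 0 * X 0 - X 3 * X 3, X 0 * X 1 - X 3 * X 4, X 0 * X 2 - X 3 * X 5,
          X 1 * X 1 - X 4 * X 4, X 1 * X 2 - X 4 * X 5, X 2 * X 2 - X 5 * X 5}
          ≤ RingHom.ker (aeval f1 : MvPolynomial (Fin 6) ℂ →ₐ[ℂ] MvPolynomial (Fin 6) ℂ) := by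
        rw [Ideal.span_le]
        rintro x hx
        simp only [Set.mem_insert_iff, Set.mem_singleton_iff] at hx
        rcases hx with rfl | rfl | rfl | rfl | rfl | rfl <;>
          simp [RingHom.mem_ker, f1_0, f1_1, f1_2, f1_3, f1_4, f1_5, mul_comm]
      calc _ ≤ (RingHom.ker (aeval f1 : MvPolynomial (Fin 6) ℂ →ₐ[ℂ]
              MvPolynomial (Fin 6) ℂ)).radical := Ideal.radical_mono hJ
        _ = _ := (RingHom.ker_isPrime _).radical
    · rw [span2_eq]
      have hJ : Ideal.span {X 0 * X 0 - X 3 * X 3, X 0 * X 1 - X 3 * X 4, X 0 * X 2 - X 3 * X 5,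
          X 1 * X 1 - X 4 * X 4, X 1 * X 2 - X 4 * X 5, X 2 * X 2 - X 5 * X 5}
          ≤ RingHom.ker (aeval f2 : MvPolynomial (Fin 6) ℂ →ₐ[ℂ] MvPolynomial (Fin 6) ℂ) := by
        rw [Ideal.span_le]
        rintro x hx
        simp only [Set.mem_insert_iff, Set.mem_singleton_iff] at hx
        rcases hx with rfl | rfl | rfl | rfl | rfl | rfl <;>
          simp [RingHom.mem_ker, f2_0, f2_1, f2_2, f2_3, f2_4, f2_5, mul_comm]
      calc _ ≤ (RingHom.ker (aeval f2 : MvPolynomial (Fin 6) ℂ →ₐ[ℂ]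
              MvPolynomial (Fin 6) ℂ)).radical := Ideal.radical_mono hJ
        _ = _ := (RingHom.ker_isPrime _).radical
  · rintro p hp
    obtain ⟨h1, h2⟩ := Submodule.mem_inf.mp hp
    have hmul : p * p ∈ (Ideal.span {X 0 - X 3, X 1 - X 4, X 2 - X 5} :
        Ideal (MvPolynomial (Fin 6) ℂ)) * Ideal.span {X 0 + X 3, X 1 + X 4, X 2 + X 5} :=
      Ideal.mul_mem_mul h1 h2
    have hle : (Ideal.span {X 0 - X 3, X 1 - X 4, X 2 - X 5} :
        Ideal (MvPolynomial (Fin 6) ℂ)) * Ideal.span {X 0 + X 3, X 1 + X 4, X 2 + X 5}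
        ≤ (Ideal.span {X 0 * X 0 - X 3 * X 3, X 0 * X 1 - X 3 * X 4, X 0 * X 2 - X 3 * X 5,
          X 1 * X 1 - X 4 * X 4, X 1 * X 2 - X 4 * X 5,
          X 2 * X 2 - X 5 * X 5}).radical := by
      rw [Ideal.span_mul_span', Ideal.span_le]
      rintro x hx
      rw [Set.mem_mul] at hx
      obtain ⟨a, ha, b, hb, rfl⟩ := hx
      simp only [Set.mem_insert_iff, Set.mem_singleton_iff] at ha hb
      rcases ha with rfl | rfl | rfl <;> rcases hb with rfl | rfl | rfl
      · exact Ideal.mem_radical_of_pow_mem (m := 2) (Ideal.le_radical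
          (memJ (X 0 * X 0 - X 3 * X 3) 0 0 0 0 0 _ (by ring)))
      · exact Ideal.mem_radical_of_pow_mem (m := 2) (Ideal.le_radical
          (memJ (X 4 * X 4)
            ((X 0 * X 1 - X 3 * X 4) + 2 * (X 0 * X 4 - X 1 * X 3) - 2 * (X 3 * X 4))
            0 (X 3 * X 3) 0 0 _ (by ring)))
      · exact Ideal.mem_radical_of_pow_mem (m := 2) (Ideal.le_radical
          (memJ (X 5 * X 5) 0
            ((X 0 * X 2 - X 3 * X 5) + 2 * (X 0 * X 5 - X 2 * X 3) - 2 * (X 3 * X 5))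
            0 0 (X 3 * X 3) _ (by ring)))
      · exact Ideal.mem_radical_of_pow_mem (m := 2) (Ideal.le_radical
          (memJ (X 4 * X 4)
            ((X 0 * X 1 - X 3 * X 4) + 2 * (X 1 * X 3 - X 0 * X 4) - 2 * (X 3 * X 4))
            0 (X 3 * X 3) 0 0 _ (by ring)))
      · exact Ideal.mem_radical_of_pow_mem (m := 2) (Ideal.le_radical
          (memJ 0 0 0 (X 1 * X 1 - X 4 * X 4) 0 0 _ (by ring)))
      · exact Ideal.mem_radical_of_pow_mem (m := 2) (Ideal.le_radical
          (memJ 0 0 0 (X 5 * X 5)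
            ((X 1 * X 2 - X 4 * X 5) + 2 * (X 1 * X 5 - X 2 * X 4) - 2 * (X 4 * X 5))
            (X 4 * X 4) _ (by ring)))
      · exact Ideal.mem_radical_of_pow_mem (m := 2) (Ideal.le_radical
          (memJ (X 5 * X 5) 0
            ((X 0 * X 2 - X 3 * X 5) + 2 * (X 2 * X 3 - X 0 * X 5) - 2 * (X 3 * X 5))
            0 0 (X 3 * X 3) _ (by ring)))
      · exact Ideal.mem_radical_of_pow_mem (m := 2) (Ideal.le_radical
          (memJ 0 0 0 (X 5 * X 5)
            ((X 1 * X 2 - X 4 * X 5) + 2 * (X 2 * X 4 - X 1 * X 5) - 2 * (X 4 * X 5))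
            (X 4 * X 4) _ (by ring)))
      · exact Ideal.mem_radical_of_pow_mem (m := 2) (Ideal.le_radical
          (memJ 0 0 0 0 0 (X 2 * X 2 - X 5 * X 5) _ (by ring)))
    have hsq : p ^ 2 ∈ (Ideal.span {X 0 * X 0 - X 3 * X 3, X 0 * X 1 - X 3 * X 4,
        X 0 * X 2 - X 3 * X 5, X 1 * X 1 - X 4 * X 4, X 1 * X 2 - X 4 * X 5,
        X 2 * X 2 - X 5 * X 5}).radical := by
      rw [sq]; exact hle hmul
    exact Ideal.mem_radical_of_pow_mem hsq
end
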